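/- If ξ is reachable at time N+1 from x for the system x(k+1) = A(k)x(k) + B(k)u(k), then the equation Φ(0,N)x − G(0)λ = ξ has a solution λ* ∈ ℝⁿ, where Φ(0,N) = A_c(N)···A_c(0) is the closed-loop transition matrix, A_c(k) = A(k) + B(k)K(k), K(k) is the Riccati feedback gain, and G(0) = Σ_{j=0}^{N} Φ(j+1,N) B(j)Γ(j)⁻¹B(j)' Φ(j+1,N)' is the closed-loop weighted Gramian. -/

import Mathlib

open Matrix

/-- `transMat A N k` is the product `A(N) * A(N-1) * ⋯ * A(k)` for `k ≤ N`,
and the identity matrix for `k > N`. -/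
noncomputable def transMat {n : ℕ} (A : ℕ → Matrix (Fin n) (Fin n) ℝ) (N : ℕ) (k : ℕ) :
    Matrix (Fin n) (Fin n) ℝ :=
  if _ : k ≤ N then transMat A N (k + 1) * A k else 1
termination_by N + 1 - k
decreasing_by omega

/-!
With the Riccati gain `K(k)`, each step of the recursion can be rewritten as
`P(k) = (A + BK)(k)ᵀ P(k+1) (A + BK)(k) + Q + K(k)ᵀ R K(k)`, so backward induction from `P(N+1) = H`
keeps every `P(k)` positive semidefinite and every `Γ(k)` positive definite.
Writing a control that reaches `ξ` as `u = K x + v` turns the system into the closed loop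
`x(k+1) = A_c(k) x(k) + B(k) v(k)`, so `ξ - Φ(0,N) x = ∑ⱼ Mⱼ v(j)` with `Mⱼ = Φ(j+1,N) B(j)`.
If `G(0) w = 0` for `G(0) = ∑ⱼ Mⱼ Γ(j)⁻¹ Mⱼᵀ`, then `∑ⱼ (Mⱼᵀ w)ᵀ Γ(j)⁻¹ (Mⱼᵀ w) = 0` forces
`Mⱼᵀ w = 0` for all `j`; so `ξ - Φ(0,N) x` is orthogonal to `ker G(0)`, which for the symmetric
`G(0)` means it lies in the range of `G(0)`.
-/

namespace Matrix

variable {ι n m : Type*} [Fintype n] [Fintype m]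

theorem IsHermitian.exists_mulVec_eq_of_orthogonal_ker [DecidableEq n] {G : Matrix n n ℝ}
    (hG : G.IsHermitian) {b : n → ℝ} (hb : ∀ w, G *ᵥ w = 0 → b ⬝ᵥ w = 0) :
    ∃ lam, G *ᵥ lam = b := by
  have hrange : LinearMap.range G.toEuclideanLin = (LinearMap.ker G.toEuclideanLin)ᗮ := by
    rw [← (isSymmetric_toEuclideanLin_iff.mpr hG).orthogonal_range,
      Submodule.orthogonal_orthogonal]
  have hb' : WithLp.toLp 2 b ∈ LinearMap.range G.toEuclideanLin := by
    rw [hrange]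
    intro w hw
    simpa [EuclideanSpace.inner_eq_star_dotProduct] using hb w.ofLp (congrArg WithLp.ofLp hw)
  obtain ⟨lam, hlam⟩ := hb'
  exact ⟨lam.ofLp, congrArg WithLp.ofLp hlam⟩

theorem exists_sum_mul_mul_transpose_mulVec_eq (s : Finset ι) (M : ι → Matrix n m ℝ)
    {W : ι → Matrix m m ℝ} (hW : ∀ j ∈ s, (W j).PosDef) (v : ι → m → ℝ) :
    ∃ lam, (∑ j ∈ s, M j * W j * (M j)ᵀ) *ᵥ lam = ∑ j ∈ s, M j *ᵥ v j := by
  classical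
  have hpsd : ∀ j ∈ s, (M j * W j * (M j)ᵀ).PosSemidef := fun j hj =>
    (hW j hj).posSemidef.mul_mul_conjTranspose_same (M j)
  refine (posSemidef_sum s hpsd).isHermitian.exists_mulVec_eq_of_orthogonal_ker fun w hw => ?_
  have hquad : ∀ j ∈ s, w ⬝ᵥ (M j * W j * (M j)ᵀ) *ᵥ w = 0 := by
    have hsum : ∑ j ∈ s, w ⬝ᵥ (M j * W j * (M j)ᵀ) *ᵥ w = 0 := by
      rw [← dotProduct_sum, ← sum_mulVec, hw, dotProduct_zero]
    exact (Finset.sum_eq_zero_iff_of_nonneg fun j hj =>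
      by simpa using (hpsd j hj).dotProduct_mulVec_nonneg w).mp hsum
  have hker : ∀ j ∈ s, (M j)ᵀ *ᵥ w = 0 := by
    intro j hj
    by_contra hne
    refine ((hW j hj).dotProduct_mulVec_pos hne).ne' ?_
    rw [star_trivial, ← hquad j hj, ← mulVec_mulVec, ← mulVec_mulVec, dotProduct_mulVec w (M j),
      ← mulVec_transpose]
  rw [sum_dotProduct]
  refine Finset.sum_eq_zero fun j hj => ?_
  rw [dotProduct_comm, dotProduct_mulVec, ← mulVec_transpose, hker j hj, zero_dotProduct]

theorem PosDef.add_transpose_mul_mul_same {R : Matrix m m ℝ} (hR : R.PosDef) {P : Matrix n n ℝ}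
    (hP : P.PosSemidef) (B : Matrix n m ℝ) : (R + Bᵀ * P * B).PosDef := by
  simpa using hR.add_posSemidef (hP.conjTranspose_mul_mul_same B)

variable [DecidableEq m] (A Q : Matrix n n ℝ) (B : Matrix n m ℝ) {R : Matrix m m ℝ}

theorem riccati_eq_closedLoop {Γ : Matrix m m ℝ} {K : Matrix m n ℝ} {P : Matrix n n ℝ}
    (hΓ : Γ = R + Bᵀ * P * B) (hΓu : IsUnit Γ.det)
    (hK : K = -(Γ⁻¹ * (Bᵀ * P * A))) :
    Aᵀ * P * A + Q - Aᵀ * P * B * Γ⁻¹ * (Bᵀ * P * A)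
      = (A + B * K)ᵀ * P * (A + B * K) + Q + Kᵀ * R * K := by
  have hexpand : (A + B * K)ᵀ * P * (A + B * K) + Q + Kᵀ * R * K
      = Aᵀ * P * A + Q + Aᵀ * P * B * K + Kᵀ * (Bᵀ * P * A) + Kᵀ * (Γ * K) := by
    simp only [hΓ, transpose_add, transpose_mul, Matrix.add_mul, Matrix.mul_add, Matrix.mul_assoc]
    abel
  have hΓK : Γ * K = -(Bᵀ * P * A) := by
    rw [hK, Matrix.mul_neg, ← Matrix.mul_assoc, mul_nonsing_inv _ hΓu, Matrix.one_mul]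
  rw [hexpand, hΓK, Matrix.mul_neg, add_neg_cancel_right, hK, Matrix.mul_neg, sub_eq_add_neg]
  simp only [Matrix.mul_assoc]

theorem riccati_posSemidef_of_posSemidef {P : Matrix n n ℝ} (hP : P.PosSemidef)
    (hQ : Q.PosSemidef) (hR : R.PosDef) :
    (Aᵀ * P * A + Q - Aᵀ * P * B * (R + Bᵀ * P * B)⁻¹ * (Bᵀ * P * A)).PosSemidef := by
  set K := -((R + Bᵀ * P * B)⁻¹ * (Bᵀ * P * A))
  rw [riccati_eq_closedLoop A Q B (P := P) (K := K) rfl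
    (hR.add_transpose_mul_mul_same hP B).det_pos.ne'.isUnit rfl]
  have hcl := hP.conjTranspose_mul_mul_same (A + B * K)
  have hKRK := hR.posSemidef.conjTranspose_mul_mul_same K
  rw [conjTranspose_eq_transpose_of_trivial] at hcl hKRK
  exact (hcl.add hQ).add hKRK

end Matrix

section TransitionMatrix

variable {n : ℕ} (F : ℕ → Matrix (Fin n) (Fin n) ℝ) {N k : ℕ}

theorem transMat_of_le (h : k ≤ N) : transMat F N k = transMat F N (k + 1) * F k := by
  rw [transMat, dif_pos h]

theorem transMat_of_lt (h : N < k) : transMat F N k = 1 := by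
  rw [transMat, dif_neg (Nat.not_le.mpr h)]

theorem eq_transMat_mulVec_add_sum {x w : ℕ → Fin n → ℝ}
    (hx : ∀ k ≤ N, x (k + 1) = F k *ᵥ x k + w k) (ht : k ≤ N + 1) :
    x (N + 1) = transMat F N k *ᵥ x k + ∑ j ∈ Finset.Icc k N, transMat F N (j + 1) *ᵥ w j := by
  induction ht using Nat.decreasingInduction with
  | self => simp [transMat_of_lt F (Nat.lt_succ_self N)]
  | of_succ k hk ih =>
    rw [ih, hx k (Nat.lt_succ_iff.mp hk), mulVec_add, mulVec_mulVec,
      ← transMat_of_le F (Nat.lt_succ_iff.mp hk), ← Finset.insert_Icc_add_one_left_eq_Icc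
        (Nat.lt_succ_iff.mp hk), Finset.sum_insert (by simp), add_assoc]

theorem exists_gramian_mulVec_eq {m : ℕ} (B : ℕ → Matrix (Fin n) (Fin m) ℝ)
    {W : ℕ → Matrix (Fin m) (Fin m) ℝ} (hW : ∀ k ≤ N, (W k).PosDef)
    {x : ℕ → Fin n → ℝ} {v : ℕ → Fin m → ℝ} (hx : ∀ k ≤ N, x (k + 1) = F k *ᵥ x k + B k *ᵥ v k) :
    ∃ lam, (∑ j ∈ Finset.Icc 0 N, transMat F N (j + 1) * (B j * W j * (B j)ᵀ)
        * (transMat F N (j + 1))ᵀ) *ᵥ lam = x (N + 1) - transMat F N 0 *ᵥ x 0 := by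
  obtain ⟨lam, hlam⟩ := exists_sum_mul_mul_transpose_mulVec_eq (Finset.Icc 0 N)
    (fun j => transMat F N (j + 1) * B j) (fun j hj => hW j (Finset.mem_Icc.mp hj).2) v
  refine ⟨lam, ?_⟩
  rw [eq_transMat_mulVec_add_sum F hx (Nat.zero_le _), add_sub_cancel_left]
  simpa only [transpose_mul, Matrix.mul_assoc, mulVec_mulVec] using hlam

end TransitionMatrix

theorem riccati_posSemidef {n m N : ℕ}
    (A : ℕ → Matrix (Fin n) (Fin n) ℝ) (B : ℕ → Matrix (Fin n) (Fin m) ℝ)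
    {Q H : Matrix (Fin n) (Fin n) ℝ} {R : Matrix (Fin m) (Fin m) ℝ}
    (hQ : Q.PosSemidef) (hH : H.PosSemidef) (hR : R.PosDef)
    {P : ℕ → Matrix (Fin n) (Fin n) ℝ} (hPterm : P (N + 1) = H)
    (hP : ∀ k ≤ N, P k
        = (A k)ᵀ * P (k + 1) * A k + Q
          - (A k)ᵀ * P (k + 1) * B k * (R + (B k)ᵀ * P (k + 1) * B k)⁻¹
              * ((B k)ᵀ * P (k + 1) * A k))
    {k : ℕ} (hk : k ≤ N + 1) : (P k).PosSemidef := by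
  induction hk using Nat.decreasingInduction with
  | self => rwa [hPterm]
  | of_succ k hk ih =>
    rw [hP k (Nat.lt_succ_iff.mp hk)]
    exact riccati_posSemidef_of_posSemidef (A k) Q (B k) ih hQ hR

theorem terminal_constraint_solvable_general {n m N : ℕ}
    (A : ℕ → Matrix (Fin n) (Fin n) ℝ) (B : ℕ → Matrix (Fin n) (Fin m) ℝ)
    (Q H : Matrix (Fin n) (Fin n) ℝ) (R : Matrix (Fin m) (Fin m) ℝ)
    (hQ : Q.PosSemidef) (hH : H.PosSemidef) (hR : R.PosDef)
    (P : ℕ → Matrix (Fin n) (Fin n) ℝ)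
    (hPterm : P (N + 1) = H)
    (hP : ∀ k ≤ N, P k
        = (A k)ᵀ * P (k + 1) * A k + Q
          - (A k)ᵀ * P (k + 1) * B k * (R + (B k)ᵀ * P (k + 1) * B k)⁻¹
              * ((B k)ᵀ * P (k + 1) * A k))
    (Γ : ℕ → Matrix (Fin m) (Fin m) ℝ)
    (hΓ : ∀ k ≤ N, Γ k = R + (B k)ᵀ * P (k + 1) * B k)
    (K : ℕ → Matrix (Fin m) (Fin n) ℝ)
    (Ac : ℕ → Matrix (Fin n) (Fin n) ℝ)
    (hAc : ∀ k ≤ N, Ac k = A k + B k * K k)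
    (x0 ξ : Fin n → ℝ)
    (hreach : ∃ (x : ℕ → Fin n → ℝ) (u : ℕ → Fin m → ℝ),
        x 0 = x0 ∧ (∀ k ≤ N, x (k + 1) = A k *ᵥ x k + B k *ᵥ u k)
          ∧ x (N + 1) = ξ) :
    ∃ lam : Fin n → ℝ,
      transMat Ac N 0 *ᵥ x0
        - (∑ j ∈ Finset.Icc 0 N,
            transMat Ac N (j + 1) * (B j * (Γ j)⁻¹ * (B j)ᵀ)
              * (transMat Ac N (j + 1))ᵀ) *ᵥ lam = ξ := by
  obtain ⟨x, u, rfl, hdyn, rfl⟩ := hreach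
  have hΓ_posDef : ∀ k ≤ N, (Γ k).PosDef := fun k hk => by
    rw [hΓ k hk]
    exact hR.add_transpose_mul_mul_same
      (riccati_posSemidef A B hQ hH hR hPterm hP (Nat.succ_le_succ hk)) _
  have hclosed : ∀ k ≤ N, x (k + 1) = Ac k *ᵥ x k + B k *ᵥ (u k - K k *ᵥ x k) := fun k hk => by
    rw [hdyn k hk, hAc k hk, add_mulVec, mulVec_sub, mulVec_mulVec]
    abel
  obtain ⟨lam, hlam⟩ := exists_gramian_mulVec_eq Ac B (fun k hk => (hΓ_posDef k hk).inv) hclosed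
  exact ⟨-lam, by rw [mulVec_neg, hlam]; abel⟩

/-- If `ξ` is reachable at time `N+1` from `x0`, then the terminal-constraint
equation `Φ(0,N) x − G(0) λ = ξ` for the closed-loop transition matrix and the
closed-loop weighted Gramian has a solution `λ*`. -/
theorem terminal_constraint_solvable {n m N : ℕ}
    (A : ℕ → Matrix (Fin n) (Fin n) ℝ) (B : ℕ → Matrix (Fin n) (Fin m) ℝ)
    (Q H : Matrix (Fin n) (Fin n) ℝ) (R : Matrix (Fin m) (Fin m) ℝ)
    (hQ : Q.PosSemidef) (hH : H.PosSemidef) (hR : R.PosDef)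
    (P : ℕ → Matrix (Fin n) (Fin n) ℝ)
    (hPterm : P (N + 1) = H)
    (hP : ∀ k ≤ N, P k
        = (A k)ᵀ * P (k + 1) * A k + Q
          - (A k)ᵀ * P (k + 1) * B k * (R + (B k)ᵀ * P (k + 1) * B k)⁻¹
              * ((B k)ᵀ * P (k + 1) * A k))
    (Γ : ℕ → Matrix (Fin m) (Fin m) ℝ)
    (hΓ : ∀ k ≤ N, Γ k = R + (B k)ᵀ * P (k + 1) * B k)
    (K : ℕ → Matrix (Fin m) (Fin n) ℝ)
    (hK : ∀ k ≤ N, K k = -((Γ k)⁻¹ * ((B k)ᵀ * P (k + 1) * A k)))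
    (Ac : ℕ → Matrix (Fin n) (Fin n) ℝ)
    (hAc : ∀ k ≤ N, Ac k = A k + B k * K k)
    (x0 ξ : Fin n → ℝ)
    (hreach : ∃ (x : ℕ → Fin n → ℝ) (u : ℕ → Fin m → ℝ),
        x 0 = x0 ∧ (∀ k ≤ N, x (k + 1) = A k *ᵥ x k + B k *ᵥ u k)
          ∧ x (N + 1) = ξ) :
    ∃ lam : Fin n → ℝ,
      transMat Ac N 0 *ᵥ x0
        - (∑ j ∈ Finset.Icc 0 N,
            transMat Ac N (j + 1) * (B j * (Γ j)⁻¹ * (B j)ᵀ)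
              * (transMat Ac N (j + 1))ᵀ) *ᵥ lam = ξ :=
  terminal_constraint_solvable_general A B Q H R hQ hH hR P hPterm hP Γ hΓ K Ac hAc x0 ξ hreach
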